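/- arXiv:2307.15869 — 2 statements merged into one kernel-verified Lean document; each statement's English description precedes it below -/
import Mathlib

section
/- Let X be a real locally convex topological vector space and let Ω ⊂ X be a quasi-nearly convex set. If qi(Ω) ≠ ∅, then qi(Ω) = qri(Ω). -/
open Pointwise Set

/-- Conic hull: `cone(A) = {λa : λ ≥ 0, a ∈ A}`. -/
def coneHull {Z : Type*} [AddCommGroup Z] [Module ℝ Z] (A : Set Z) : Set Z :=
  {y | ∃ c : ℝ, 0 ≤ c ∧ ∃ a ∈ A, y = c • a}

/-- A set is a linear subspace if it underlies some `ℝ`-submodule. -/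
def IsLinearSubspace {Z : Type*} [AddCommGroup Z] [Module ℝ Z] (S : Set Z) : Prop :=
  ∃ L : Submodule ℝ Z, (L : Set Z) = S

/-- Quasi-interior. -/
def qi {Z : Type*} [AddCommGroup Z] [Module ℝ Z] [TopologicalSpace Z] (A : Set Z) : Set Z :=
  {x ∈ A | closure (coneHull (A - {x})) = univ}

/-- Quasi-relative interior. -/
def qri {Z : Type*} [AddCommGroup Z] [Module ℝ Z] [TopologicalSpace Z] (A : Set Z) : Set Z :=
  {x ∈ A | IsLinearSubspace (closure (coneHull (A - {x})))}

/-- A set is quasi-nearly convex if it is squeezed between a convex set with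
nonempty quasi-relative interior and its closure. -/
def QuasiNearlyConvex {Z : Type*} [AddCommGroup Z] [Module ℝ Z] [TopologicalSpace Z]
    (A : Set Z) : Prop :=
  ∃ C : Set Z, Convex ℝ C ∧ (qri C).Nonempty ∧ C ⊆ A ∧ A ⊆ closure C

/-!
If `x ∈ qri Ω`, the closed subspace `L = cl cone(Ω - x)` contains `Ω - x`, hence also
`Ω - x₀ = (Ω - x) - (x₀ - x)` for every `x₀ ∈ Ω`. For `x₀ ∈ qi Ω` this forces
`X = cl cone(Ω - x₀) ⊆ L`.
-/

section

variable {Z : Type*} [AddCommGroup Z] [Module ℝ Z]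

theorem subset_coneHull (A : Set Z) : A ⊆ coneHull A :=
  fun a ha => ⟨1, zero_le_one, a, ha, (one_smul ℝ a).symm⟩

theorem coneHull_subset_submodule {A : Set Z} {L : Submodule ℝ Z} (hA : A ⊆ L) :
    coneHull A ⊆ L := by
  rintro _ ⟨c, -, a, ha, rfl⟩
  exact L.smul_mem c (hA ha)

theorem sub_singleton_subset_submodule_of_mem {A : Set Z} {L : Submodule ℝ Z} {x y : Z}
    (hx : A - {x} ⊆ L) (hy : y ∈ A) : A - {y} ⊆ L := by
  rintro _ ⟨a, ha, b, hb, rfl⟩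
  rw [mem_singleton_iff.mp hb]
  simpa only [SetLike.mem_coe, sub_sub_sub_cancel_right] using
    L.sub_mem (hx (sub_mem_sub ha rfl)) (hx (sub_mem_sub hy rfl))

variable [TopologicalSpace Z]

theorem qi_subset_qri (A : Set Z) : qi A ⊆ qri A :=
  fun _ ⟨hxA, hx⟩ => ⟨hxA, ⊤, Submodule.top_coe.trans hx.symm⟩

theorem qri_subset_qi_of_nonempty {A : Set Z} (hA : (qi A).Nonempty) : qri A ⊆ qi A := by
  obtain ⟨y, hyA, hy⟩ := hA
  rintro x ⟨hxA, L, hL⟩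
  have hx : A - {x} ⊆ L := hL ▸ (subset_coneHull _).trans subset_closure
  have hy_sub : closure (coneHull (A - {y})) ⊆ L :=
    closure_minimal (coneHull_subset_submodule (sub_singleton_subset_submodule_of_mem hx hyA))
      (hL ▸ isClosed_closure)
  refine ⟨hxA, ?_⟩
  rw [← hL]
  exact eq_univ_of_univ_subset (hy ▸ hy_sub)

end

theorem stmt17_general {X : Type*} [AddCommGroup X] [Module ℝ X] [TopologicalSpace X]
    (Ω : Set X) (hqi : (qi Ω).Nonempty) :
    qi Ω = qri Ω :=
  (qi_subset_qri Ω).antisymm (qri_subset_qi_of_nonempty hqi)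

theorem stmt17 {X : Type*} [AddCommGroup X] [Module ℝ X] [TopologicalSpace X]
    [IsTopologicalAddGroup X] [ContinuousSMul ℝ X] [LocallyConvexSpace ℝ X]
    (Ω : Set X) (h : QuasiNearlyConvex Ω) (hqi : (qi Ω).Nonempty) :
    qi Ω = qri Ω :=
  stmt17_general Ω hqi
end

section
/- Let X and Y be real locally convex topological vector spaces and let F : X ⇒ Y be a set-valued mapping whose graph is quasi-nearly convex. Then: (a) if gph(F) is quasi-regular (i.e., qri(gph(F)) = iri(gph(F))), then qri(gph(F)) ⊂ {(x,y) ∈ X × Y : x ∈ qri(dom(F)), y ∈ qri(F(x))}; (b) if F(x) is quasi-nearly convex and qi(F(x)) ≠ ∅ for every x ∈ dom(F), then qri(gph(F)) ⊃ {(x,y) ∈ X × Y : x ∈ qri(dom(F)), y ∈ qri(F(x))}. Consequently, under all of these assumptions, qri(gph(F)) = {(x,y) : x ∈ qri(dom(F)), y ∈ qri(F(x))}. -/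
/-!
Everything is read off the cone `cone(gph F - (x, y))`. Its projection to `X` is
`cone(dom F - x)` and its vertical slice `{v | (0, v) ∈ cone(gph F - (x, y))}` is
`cone(F x - y)`; linear images and preimages of subspaces are subspaces, so a point of
`iri (gph F)` has both coordinates in the respective `iri`, hence in `qri` (this gives (a),
as `qri = iri` on the graph). For (b), a point of `qri (F x)` is a quasi-interior point once
`qi (F x)` is nonempty, so the closure of the cone of the graph contains `{0} × Y`; since the
graph is squeezed between a convex set and its closure, that closure is a closed convex cone,
hence closed under addition, and therefore equals `cl cone(dom F - x) × Y`, a subspace when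
`x ∈ qri (dom F)`.
-/

open Pointwise Set

/-- Intrinsic relative interior. -/
def iri {Z : Type*} [AddCommGroup Z] [Module ℝ Z] (A : Set Z) : Set Z :=
  {x ∈ A | IsLinearSubspace (coneHull (A - {x}))}

/-- Domain of a set-valued mapping. -/
def svmDom {X Y : Type*} (F : X → Set Y) : Set X := {x | (F x).Nonempty}

/-- Graph of a set-valued mapping. -/
def svmGph {X Y : Type*} (F : X → Set Y) : Set (X × Y) := {p | p.2 ∈ F p.1}


section ConeHull

variable {Z W : Type*} [AddCommGroup Z] [Module ℝ Z] [AddCommGroup W] [Module ℝ W]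

lemma mem_coneHull_sub_singleton {A : Set Z} {p z : Z} :
    z ∈ coneHull (A - {p}) ↔ ∃ c : ℝ, 0 ≤ c ∧ ∃ a ∈ A, z = c • (a - p) := by
  simp only [coneHull, sub_singleton, mem_ofPred_eq, mem_image, exists_exists_and_eq_and]

lemma smul_sub_mem_coneHull {A : Set Z} {p a : Z} {c : ℝ} (hc : 0 ≤ c) (ha : a ∈ A) :
    c • (a - p) ∈ coneHull (A - {p}) :=
  mem_coneHull_sub_singleton.2 ⟨c, hc, a, ha, rfl⟩

lemma Convex.add_mem_coneHull {C : Set Z} (hC : Convex ℝ C) {a b : Z}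
    (ha : a ∈ coneHull C) (hb : b ∈ coneHull C) : a + b ∈ coneHull C := by
  obtain ⟨c, hc, x, hx, rfl⟩ := ha
  obtain ⟨d, hd, y, hy, rfl⟩ := hb
  have hsum : c • x + d • y ∈ (c + d) • C := by
    rw [hC.add_smul hc hd]
    exact add_mem_add (smul_mem_smul_set hx) (smul_mem_smul_set hy)
  obtain ⟨z, hz, hzeq⟩ := hsum
  exact ⟨c + d, add_nonneg hc hd, z, hz, hzeq.symm⟩

lemma image_coneHull (T : Z →ₗ[ℝ] W) (A : Set Z) : T '' coneHull A = coneHull (T '' A) := by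
  ext w
  constructor
  · rintro ⟨_, ⟨c, hc, a, ha, rfl⟩, rfl⟩
    exact ⟨c, hc, T a, mem_image_of_mem T ha, T.map_smul c a⟩
  · rintro ⟨c, hc, _, ⟨a, ha, rfl⟩, rfl⟩
    exact ⟨c • a, ⟨c, hc, a, ha, rfl⟩, T.map_smul c a⟩

lemma IsLinearSubspace.image (T : Z →ₗ[ℝ] W) {S : Set Z} (hS : IsLinearSubspace S) :
    IsLinearSubspace (T '' S) := by
  obtain ⟨L, rfl⟩ := hS
  exact ⟨L.map T, Submodule.map_coe T L⟩

lemma IsLinearSubspace.preimage (T : Z →ₗ[ℝ] W) {S : Set W} (hS : IsLinearSubspace S) :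
    IsLinearSubspace (T ⁻¹' S) := by
  obtain ⟨L, rfl⟩ := hS
  exact ⟨L.comap T, Submodule.comap_coe T L⟩

lemma mem_iri_image (T : Z →ₗ[ℝ] W) {A : Set Z} {x : Z} (hx : x ∈ iri A) :
    T x ∈ iri (T '' A) := by
  refine ⟨mem_image_of_mem T hx.1, ?_⟩
  rw [← image_singleton, ← image_sub, ← image_coneHull]
  exact hx.2.image T

end ConeHull

section Topological

variable {Z : Type*} [AddCommGroup Z] [Module ℝ Z] [TopologicalSpace Z]

lemma IsLinearSubspace.closure [ContinuousAdd Z] [ContinuousConstSMul ℝ Z] {S : Set Z}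
    (hS : IsLinearSubspace S) : IsLinearSubspace (closure S) := by
  obtain ⟨L, rfl⟩ := hS
  exact ⟨L.topologicalClosure, L.topologicalClosure_coe⟩

lemma iri_subset_qri [ContinuousAdd Z] [ContinuousConstSMul ℝ Z] (A : Set Z) :
    iri A ⊆ qri A :=
  fun _ hx => ⟨hx.1, hx.2.closure⟩

/-- For a quasi-interior point `y`, the closed subspace `cl cone(A - x)` contains every
`a - y = (a - x) - (y - x)`, hence the dense set `cone(A - y)`. -/
lemma mem_qi_of_mem_qri {A : Set Z} (hqi : (qi A).Nonempty) {x : Z} (hx : x ∈ qri A) :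
    x ∈ qi A := by
  obtain ⟨y, hyA, hyu⟩ := hqi
  obtain ⟨hxA, L, hL⟩ := hx
  have mem_L : ∀ a ∈ A, a - x ∈ L := fun a ha => by
    rw [← SetLike.mem_coe, hL]
    exact subset_closure (one_smul ℝ (a - x) ▸ smul_sub_mem_coneHull zero_le_one ha)
  have hcone : coneHull (A - {y}) ⊆ L := by
    intro z hz
    obtain ⟨c, -, a, ha, rfl⟩ := mem_coneHull_sub_singleton.1 hz
    rw [← sub_sub_sub_cancel_right a y x]
    exact L.smul_mem c (L.sub_mem (mem_L a ha) (mem_L y hyA))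
  refine ⟨hxA, eq_univ_of_univ_subset ?_⟩
  rw [← hyu, ← hL]
  exact closure_minimal hcone (hL ▸ isClosed_closure)

lemma closure_coneHull_sub_singleton_congr [IsTopologicalAddGroup Z] [ContinuousConstSMul ℝ Z]
    {C A : Set Z} (hCA : C ⊆ A) (hAC : A ⊆ closure C) (p : Z) :
    closure (coneHull (A - {p})) = closure (coneHull (C - {p})) := by
  refine (closure_minimal ?_ isClosed_closure).antisymm (closure_mono ?_)
  · intro z hz
    obtain ⟨c, hc, a, ha, rfl⟩ := mem_coneHull_sub_singleton.1 hz
    exact map_mem_closure (f := fun z => c • (z - p)) (by fun_prop) (hAC ha)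
      fun _ hz => smul_sub_mem_coneHull hc hz
  · intro z hz
    obtain ⟨c, hc, a, ha, rfl⟩ := mem_coneHull_sub_singleton.1 hz
    exact smul_sub_mem_coneHull hc (hCA ha)

lemma Convex.add_mem_closure_coneHull [ContinuousAdd Z] {C : Set Z} (hC : Convex ℝ C) {a b : Z}
    (ha : a ∈ closure (coneHull C)) (hb : b ∈ closure (coneHull C)) :
    a + b ∈ closure (coneHull C) :=
  map_mem_closure₂ continuous_add ha hb fun _ hx _ hy => hC.add_mem_coneHull hx hy

lemma QuasiNearlyConvex.add_mem_closure_coneHull [IsTopologicalAddGroup Z]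
    [ContinuousConstSMul ℝ Z] {A : Set Z} (hA : QuasiNearlyConvex A) (p : Z) {a b : Z}
    (ha : a ∈ closure (coneHull (A - {p}))) (hb : b ∈ closure (coneHull (A - {p}))) :
    a + b ∈ closure (coneHull (A - {p})) := by
  obtain ⟨C, hC, -, hCA, hAC⟩ := hA
  rw [closure_coneHull_sub_singleton_congr hCA hAC p] at ha hb ⊢
  exact (hC.sub (convex_singleton p)).add_mem_closure_coneHull ha hb

end Topological

lemma closure_eq_closure_image_fst_prod_univ {X Y : Type*} [AddCommGroup X] [TopologicalSpace X]
    [AddCommGroup Y] [TopologicalSpace Y] {S : Set (X × Y)}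
    (hadd : ∀ a ∈ closure S, ∀ b ∈ closure S, a + b ∈ closure S)
    (hvert : ∀ y : Y, ((0 : X), y) ∈ closure S) :
    closure S = closure (Prod.fst '' S) ×ˢ univ := by
  refine subset_antisymm (fun z hz => ⟨closure_subset_preimage_closure_image continuous_fst hz,
    mem_univ _⟩) ?_
  rw [← closure_univ, ← closure_prod_eq]
  refine closure_minimal ?_ isClosed_closure
  rintro ⟨_, y⟩ ⟨⟨z, hz, rfl⟩, -⟩
  have hsum := hadd z (subset_closure hz) _ (hvert (y - z.2))
  rwa [Prod.mk_add_mk, add_zero, add_sub_cancel] at hsum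

section SetValued

variable {X Y : Type*} [AddCommGroup X] [Module ℝ X] [AddCommGroup Y] [Module ℝ Y]
  (F : X → Set Y)

lemma svmDom_eq_image_fst : svmDom F = LinearMap.fst ℝ X Y '' svmGph F := by
  ext x
  simp [svmDom, svmGph, Set.Nonempty]

lemma coneHull_svmDom_sub_singleton (p : X × Y) :
    coneHull (svmDom F - {p.1}) = LinearMap.fst ℝ X Y '' coneHull (svmGph F - {p}) := by
  rw [image_coneHull, image_sub, image_singleton, svmDom_eq_image_fst, LinearMap.fst_apply]

/-- The cone of a fibre is the vertical slice of the cone of the graph: a generator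
`c • ((x, y) - p)` of the latter is vertical only if `c = 0` or `x = p.1`. -/
lemma coneHull_sub_singleton_eq_preimage_inr {p : X × Y} (hp : p.2 ∈ F p.1) :
    coneHull (F p.1 - {p.2}) = LinearMap.inr ℝ X Y ⁻¹' coneHull (svmGph F - {p}) := by
  ext v
  simp only [mem_preimage, LinearMap.inr_apply, mem_coneHull_sub_singleton]
  constructor
  · rintro ⟨c, hc, y, hy, rfl⟩
    exact ⟨c, hc, (p.1, y), hy, by ext <;> simp⟩
  · rintro ⟨c, hc, ⟨x, y⟩, hxy, heq⟩
    obtain ⟨hfst, hsnd⟩ := Prod.ext_iff.1 heq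
    simp only [Prod.smul_fst, Prod.fst_sub, Prod.smul_snd, Prod.snd_sub] at hfst hsnd
    rcases smul_eq_zero.1 hfst.symm with rfl | hx
    · exact ⟨0, le_rfl, p.2, hp, by simpa using hsnd⟩
    · rw [sub_eq_zero.1 hx] at hxy
      exact ⟨c, hc, y, hxy, hsnd⟩

lemma fst_mem_iri_svmDom {p : X × Y} (hp : p ∈ iri (svmGph F)) : p.1 ∈ iri (svmDom F) := by
  rw [svmDom_eq_image_fst]
  exact mem_iri_image _ hp

lemma snd_mem_iri {p : X × Y} (hp : p ∈ iri (svmGph F)) : p.2 ∈ iri (F p.1) := by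
  refine ⟨hp.1, ?_⟩
  rw [coneHull_sub_singleton_eq_preimage_inr F hp.1]
  exact hp.2.preimage _

variable [TopologicalSpace X] [IsTopologicalAddGroup X] [ContinuousConstSMul ℝ X]
  [TopologicalSpace Y] [IsTopologicalAddGroup Y] [ContinuousConstSMul ℝ Y]

lemma iri_svmGph_subset :
    iri (svmGph F) ⊆ {p : X × Y | p.1 ∈ qri (svmDom F) ∧ p.2 ∈ qri (F p.1)} :=
  fun _ hp => ⟨iri_subset_qri _ (fst_mem_iri_svmDom F hp), iri_subset_qri _ (snd_mem_iri F hp)⟩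

lemma mem_qri_svmGph (h : QuasiNearlyConvex (svmGph F)) {p : X × Y}
    (hx : p.1 ∈ qri (svmDom F)) (hy : p.2 ∈ qi (F p.1)) : p ∈ qri (svmGph F) := by
  obtain ⟨Lx, hLx⟩ := hx.2
  have hvert : ∀ w : Y, ((0 : X), w) ∈ closure (coneHull (svmGph F - {p})) := fun w =>
    map_mem_closure (f := fun v : Y => ((0 : X), v)) (by fun_prop) (hy.2 ▸ mem_univ w)
      fun v hv => by rwa [coneHull_sub_singleton_eq_preimage_inr F hy.1] at hv
  have hcyl : closure (coneHull (svmGph F - {p})) = (Lx : Set X) ×ˢ univ := by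
    rw [closure_eq_closure_image_fst_prod_univ
      (fun _ ha _ hb => h.add_mem_closure_coneHull p ha hb) hvert, hLx,
      coneHull_svmDom_sub_singleton, LinearMap.coe_fst]
  exact ⟨hy.1, Lx.prod ⊤, by rw [hcyl, Submodule.prod_coe, Submodule.top_coe]⟩

end SetValued

theorem stmt19_general {X Y : Type*}
    [AddCommGroup X] [Module ℝ X] [TopologicalSpace X]
    [IsTopologicalAddGroup X] [ContinuousSMul ℝ X]
    [AddCommGroup Y] [Module ℝ Y] [TopologicalSpace Y]
    [IsTopologicalAddGroup Y] [ContinuousSMul ℝ Y]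
    (F : X → Set Y) (h : QuasiNearlyConvex (svmGph F)) :
    (qri (svmGph F) = iri (svmGph F) →
      qri (svmGph F) ⊆ {p : X × Y | p.1 ∈ qri (svmDom F) ∧ p.2 ∈ qri (F p.1)}) ∧
    ((∀ x ∈ svmDom F, QuasiNearlyConvex (F x) ∧ (qi (F x)).Nonempty) →
      {p : X × Y | p.1 ∈ qri (svmDom F) ∧ p.2 ∈ qri (F p.1)} ⊆ qri (svmGph F)) ∧
    (qri (svmGph F) = iri (svmGph F) →
      (∀ x ∈ svmDom F, QuasiNearlyConvex (F x) ∧ (qi (F x)).Nonempty) →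
      qri (svmGph F) = {p : X × Y | p.1 ∈ qri (svmDom F) ∧ p.2 ∈ qri (F p.1)}) := by
  have part_a : qri (svmGph F) = iri (svmGph F) →
      qri (svmGph F) ⊆ {p : X × Y | p.1 ∈ qri (svmDom F) ∧ p.2 ∈ qri (F p.1)} :=
    fun hreg => hreg ▸ iri_svmGph_subset F
  have part_b : (∀ x ∈ svmDom F, QuasiNearlyConvex (F x) ∧ (qi (F x)).Nonempty) →
      {p : X × Y | p.1 ∈ qri (svmDom F) ∧ p.2 ∈ qri (F p.1)} ⊆ qri (svmGph F) :=
    fun hF p ⟨hx, hy⟩ => mem_qri_svmGph F h hx (mem_qi_of_mem_qri (hF p.1 ⟨p.2, hy.1⟩).2 hy)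
  exact ⟨part_a, part_b, fun hreg hF => (part_a hreg).antisymm (part_b hF)⟩

theorem stmt19 {X Y : Type*}
    [AddCommGroup X] [Module ℝ X] [TopologicalSpace X]
    [IsTopologicalAddGroup X] [ContinuousSMul ℝ X] [LocallyConvexSpace ℝ X]
    [AddCommGroup Y] [Module ℝ Y] [TopologicalSpace Y]
    [IsTopologicalAddGroup Y] [ContinuousSMul ℝ Y] [LocallyConvexSpace ℝ Y]
    (F : X → Set Y) (h : QuasiNearlyConvex (svmGph F)) :
    (qri (svmGph F) = iri (svmGph F) →
      qri (svmGph F) ⊆ {p : X × Y | p.1 ∈ qri (svmDom F) ∧ p.2 ∈ qri (F p.1)}) ∧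
    ((∀ x ∈ svmDom F, QuasiNearlyConvex (F x) ∧ (qi (F x)).Nonempty) →
      {p : X × Y | p.1 ∈ qri (svmDom F) ∧ p.2 ∈ qri (F p.1)} ⊆ qri (svmGph F)) ∧
    (qri (svmGph F) = iri (svmGph F) →
      (∀ x ∈ svmDom F, QuasiNearlyConvex (F x) ∧ (qi (F x)).Nonempty) →
      qri (svmGph F) = {p : X × Y | p.1 ∈ qri (svmDom F) ∧ p.2 ∈ qri (F p.1)}) :=
  stmt19_general F h
end
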